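/- Let g be a carcass map which is topologically conjugated to the tent map f via a homeomorphism h : [0,1] → [0,1] with h(0) = 0 and h ∘ f = g ∘ h. Then the following conditions are equivalent: (1) h is piecewise linear; (2) there exist r > 0 and t > 0 such that for every n ≥ 1 and every k with 0 ≤ k ≤ 2^{n-1}, if μ_{n,k}(g) < r then μ_{n,k}(g) = t·k/2^{n-1}. -/

import Mathlib

open Set

/-- The tent map: `f(x) = 2x` for `x ≤ 1/2` and `f(x) = 2 - 2x` for `x ≥ 1/2`. -/
noncomputable def tent (x : ℝ) : ℝ := min (2 * x) (2 - 2 * x)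

/-- A unimodal map of `[0,1]`. -/
def IsUnimodal (g : ℝ → ℝ) : Prop :=
  ContinuousOn g (Icc 0 1) ∧ MapsTo g (Icc 0 1) (Icc 0 1) ∧
  ∃ v ∈ Ioo (0:ℝ) 1, StrictMonoOn g (Icc 0 v) ∧ StrictAntiOn g (Icc v 1) ∧
    g 0 = 0 ∧ g 1 = 0 ∧ g v = 1

/-- `g` is piecewise linear (affine) on `[a,b]`. -/
def IsPLOn (g : ℝ → ℝ) (a b : ℝ) : Prop :=
  ∃ (n : ℕ) (p : ℕ → ℝ), 0 < n ∧ p 0 = a ∧ p n = b ∧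
    (∀ i < n, p i < p (i + 1)) ∧
    ∀ i < n, ∃ c d : ℝ, ∀ x ∈ Icc (p i) (p (i + 1)), g x = c * x + d

/-- A carcass map: a piecewise linear unimodal map. -/
def IsCarcass (g : ℝ → ℝ) : Prop := IsUnimodal g ∧ IsPLOn g 0 1

/-- `g^{-n}(0)`, the set of points of `[0,1]` mapped to `0` by the `n`-th iterate. -/
def preimZero (g : ℝ → ℝ) (n : ℕ) : Set ℝ := {x ∈ Icc (0:ℝ) 1 | g^[n] x = 0}

/-- The complete pre-image of `0` under `g`. -/
def completePreimZero (g : ℝ → ℝ) : Set ℝ := ⋃ n ∈ {n : ℕ | 1 ≤ n}, preimZero g n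

/-- A homeomorphism of `[0,1]` onto itself (a continuous bijection of the compact
interval `[0,1]`, whose inverse is then automatically continuous). -/
def IsHomeoI (h : ℝ → ℝ) : Prop :=
  ContinuousOn h (Icc 0 1) ∧ BijOn h (Icc 0 1) (Icc 0 1)

/-- `h` is a topological conjugacy from the tent map to `g`, i.e. a homeomorphism of
`[0,1]` with `h 0 = 0` and `h ∘ f = g ∘ h`. -/
def ConjTent (g h : ℝ → ℝ) : Prop :=
  IsHomeoI h ∧ h 0 = 0 ∧ ∀ x ∈ Icc (0:ℝ) 1, h (tent x) = g (h x)

/-- A kink of a (piecewise linear) map: an interior point where it is not differentiable. -/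
def IsKink (g : ℝ → ℝ) (x : ℝ) : Prop := x ∈ Ioo (0:ℝ) 1 ∧ ¬ DifferentiableAt ℝ g x

/-- A firm carcass map: a carcass map all of whose kinks are in the complete
pre-image of `0`. -/
def IsFirm (g : ℝ → ℝ) : Prop := IsCarcass g ∧ ∀ x, IsKink g x → x ∈ completePreimZero g

/-- A self-semiconjugation of `g`: a continuous surjective map `ψ : [0,1] → [0,1]`
with `ψ ∘ g = g ∘ ψ`. -/
def IsSelfSemiconj (g ψ : ℝ → ℝ) : Prop :=
  ContinuousOn ψ (Icc 0 1) ∧ MapsTo ψ (Icc 0 1) (Icc 0 1) ∧ SurjOn ψ (Icc 0 1) (Icc 0 1) ∧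
  ∀ x ∈ Icc (0:ℝ) 1, ψ (g x) = g (ψ x)

/-- The map `ξ_t(x) = (1 - (-1)^⌊tx⌋)/2 + (-1)^⌊tx⌋ · {tx}`. -/
noncomputable def xi (t : ℕ) (x : ℝ) : ℝ :=
  (1 - (-1 : ℝ) ^ ⌊(t : ℝ) * x⌋) / 2 + (-1 : ℝ) ^ ⌊(t : ℝ) * x⌋ * Int.fract ((t : ℝ) * x)

/-- `μ` enumerates, for each `n ≥ 1`, the set `g^{-n}(0)` in increasing order as
`μ n 0 < μ n 1 < … < μ n 2^{n-1}`. -/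
def IsMuSeq (g : ℝ → ℝ) (μ : ℕ → ℕ → ℝ) : Prop :=
  ∀ n, 1 ≤ n →
    (∀ k < 2 ^ (n - 1), μ n k < μ n (k + 1)) ∧
    ∀ x, x ∈ preimZero g n ↔ ∃ k ≤ 2 ^ (n - 1), μ n k = x

/-!
Since `h` conjugates the tent map `f` to `g`, it carries `f^{-n}(0) = {k / 2^{n-1}}` increasingly
onto `g^{-n}(0)`, so `μ_{n,k}(g) = h (k / 2^{n-1})`. If `h` is piecewise linear, it is `x ↦ t x` on
some `[0, s]`, which gives (2) with `r = t s`. Conversely, (2) says that `h x = t x` at the dyadic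
points where `h < r`, hence on some `[0, ε]` by continuity. For `2^{-N} < ε` the conjugacy then
gives `h z = g^N (h (z / 2^N)) = g^N (t z / 2^N)`, a composition of piecewise linear maps.
-/

def AffineOn (φ : ℝ → ℝ) (s : Set ℝ) : Prop := ∃ c d : ℝ, ∀ x ∈ s, φ x = c * x + d

/-- Piecewise linearity with all breakpoints in `F`; unlike a partition, `F` need not be sorted
or contained in `[a, b]`, so it can be freely enlarged. -/
def AffineOnGaps (φ : ℝ → ℝ) (F : Finset ℝ) (a b : ℝ) : Prop :=
  ∀ u v, a ≤ u → u < v → v ≤ b → (∀ w ∈ F, w ∉ Ioo u v) → AffineOn φ (Icc u v)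

theorem AffineOn.mono {φ : ℝ → ℝ} {s t : Set ℝ} (h : AffineOn φ t) (hst : s ⊆ t) :
    AffineOn φ s :=
  let ⟨c, d, hcd⟩ := h
  ⟨c, d, fun x hx => hcd x (hst hx)⟩

theorem AffineOn.isPLOn {φ : ℝ → ℝ} {a b : ℝ} (h : AffineOn φ (Icc a b)) (hab : a < b) :
    IsPLOn φ a b :=
  ⟨1, fun i => if i = 0 then a else b, one_pos, rfl, rfl, fun i hi => by
    obtain rfl := Nat.lt_one_iff.1 hi; simpa using hab,
    fun i hi => by obtain rfl := Nat.lt_one_iff.1 hi; exact h⟩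

theorem Finset.exists_gap {α : Type*} [LinearOrder α] (G : Finset α) {u' v' : α}
    (hu : ∃ w ∈ G, w ≤ u') (hv : ∃ w ∈ G, v' ≤ w) (havoid : ∀ w ∈ G, w ∉ Set.Ioo u' v') :
    ∃ u ∈ G, ∃ v ∈ G, u ≤ u' ∧ v' ≤ v ∧ ∀ w ∈ G, w ∉ Set.Ioo u v := by
  obtain ⟨wu, hwu, hwu'⟩ := hu
  obtain ⟨wv, hwv, hwv'⟩ := hv
  have hL : (G.filter (· ≤ u')).Nonempty := ⟨wu, mem_filter.2 ⟨hwu, hwu'⟩⟩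
  have hR : (G.filter (v' ≤ ·)).Nonempty := ⟨wv, mem_filter.2 ⟨hwv, hwv'⟩⟩
  obtain ⟨hu, hu'⟩ := mem_filter.1 (max'_mem _ hL)
  obtain ⟨hv, hv'⟩ := mem_filter.1 (min'_mem _ hR)
  refine ⟨_, hu, _, hv, hu', hv', fun w hw ⟨hlo, hhi⟩ => havoid w hw ⟨?_, ?_⟩⟩
  · by_contra! h
    exact (le_max' _ w (mem_filter.2 ⟨hw, h⟩)).not_gt hlo
  · by_contra! h
    exact (min'_le _ w (mem_filter.2 ⟨hw, h⟩)).not_gt hhi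

section PiecewiseLinear

variable {φ ψ : ℝ → ℝ} {a b c d : ℝ}

theorem IsPLOn.lt (h : IsPLOn φ a b) : a < b := by
  obtain ⟨n, p, hn, hp0, hpn, hp, -⟩ := h
  rw [← hp0, ← hpn]
  exact strictMonoOn_Iic_of_lt_succ hp (mem_Iic.2 (Nat.zero_le n)) (mem_Iic.2 le_rfl) hn

theorem IsPLOn.exists_affineOn_Icc_left (h : IsPLOn φ a b) :
    ∃ s, a < s ∧ s ≤ b ∧ AffineOn φ (Icc a s) := by
  obtain ⟨n, p, hn, hp0, hpn, hp, haff⟩ := h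
  have hmono := strictMonoOn_Iic_of_lt_succ hp
  refine ⟨p 1, hp0 ▸ hp 0 hn, hpn ▸ hmono.monotoneOn (mem_Iic.2 hn) (mem_Iic.2 le_rfl) hn,
    hp0 ▸ haff 0 hn⟩

theorem IsPLOn.exists_affineOnGaps (h : IsPLOn φ a b) : ∃ F, AffineOnGaps φ F a b := by
  obtain ⟨n, p, hn, hp0, hpn, hp, haff⟩ := h
  have hmono := strictMonoOn_Iic_of_lt_succ hp
  refine ⟨(Finset.range (n + 1)).image p, fun u v hau huv hvb havoid => ?_⟩
  have hmem : ∀ {i}, i ≤ n → p i ∈ (Finset.range (n + 1)).image p :=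
    fun hi => Finset.mem_image_of_mem p (Finset.mem_range.2 (Nat.lt_succ_of_le hi))
  obtain ⟨_, hiF, _, hjF, hiu, hvj, hgap⟩ :=
    Finset.exists_gap _ ⟨a, hp0 ▸ hmem (Nat.zero_le n), hau⟩ ⟨b, hpn ▸ hmem le_rfl, hvb⟩ havoid
  obtain ⟨i, hi, rfl⟩ := Finset.mem_image.1 hiF
  obtain ⟨j, hj, rfl⟩ := Finset.mem_image.1 hjF
  rw [Finset.mem_range, Nat.lt_succ_iff] at hi hj
  have hij : i < j := (hmono.lt_iff_lt hi hj).1 (by linarith)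
  have hj' : j = i + 1 := by
    by_contra hne
    exact hgap _ (hmem (by omega : i + 1 ≤ n))
      ⟨hmono hi (by simp; omega) (by omega), hmono (by simp; omega) hj (by omega)⟩
  subst hj'
  exact AffineOn.mono (haff i (by omega)) (Icc_subset_Icc hiu hvj)

theorem IsPLOn.trans (h₁ : IsPLOn φ a b) (h₂ : IsPLOn φ b c) : IsPLOn φ a c := by
  obtain ⟨n, p, hn, hp0, hpn, hp, hpaff⟩ := h₁
  obtain ⟨m, q, hm, hq0, hqm, hq, hqaff⟩ := h₂
  set r : ℕ → ℝ := fun i => if i ≤ n then p i else q (i - n)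
  have hr_left : ∀ i ≤ n, r i = p i := fun i hi => if_pos hi
  have hr_right : ∀ i, n ≤ i → r i = q (i - n) := by
    intro i hi
    rcases hi.eq_or_lt with rfl | hlt
    · simp [r, hpn, hq0]
    · exact if_neg hlt.not_ge
  refine ⟨n + m, r, by omega, by rw [hr_left 0 (Nat.zero_le n), hp0], ?_, fun i hi => ?_,
    fun i hi => ?_⟩
  · rw [hr_right _ (by omega), Nat.add_sub_cancel_left, hqm]
  · rcases lt_or_ge i n with hin | hin
    · rw [hr_left i hin.le, hr_left (i + 1) hin]
      exact hp i hin
    · rw [hr_right i hin, hr_right (i + 1) (by omega), Nat.sub_add_comm hin]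
      exact hq _ (by omega)
  · rcases lt_or_ge i n with hin | hin
    · rw [hr_left i hin.le, hr_left (i + 1) hin]
      exact hpaff i hin
    · rw [hr_right i hin, hr_right (i + 1) (by omega), Nat.sub_add_comm hin]
      exact hqaff _ (by omega)

theorem AffineOnGaps.of_insert {F : Finset ℝ} {w a' b' : ℝ}
    (h : AffineOnGaps φ (insert w F) a b) (ha : a ≤ a') (hb : b' ≤ b) (hw : w ∉ Ioo a' b') :
    AffineOnGaps φ F a' b' := by
  intro u v hau huv hvb havoid
  refine h u v (ha.trans hau) huv (hvb.trans hb) fun x hx => ?_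
  rcases Finset.mem_insert.1 hx with rfl | hx
  · exact fun hxuv => hw ⟨hau.trans_lt hxuv.1, hxuv.2.trans_le hvb⟩
  · exact havoid x hx

theorem AffineOnGaps.isPLOn {F : Finset ℝ} (h : AffineOnGaps φ F a b) (hab : a < b) :
    IsPLOn φ a b := by
  induction F using Finset.induction_on generalizing a b with
  | empty => exact AffineOn.isPLOn (h a b le_rfl hab le_rfl (by simp)) hab
  | insert w F _ ih =>
    by_cases hw : w ∈ Ioo a b
    · exact (ih (h.of_insert le_rfl hw.2.le (by simp)) hw.1).trans
        (ih (h.of_insert hw.1.le le_rfl (by simp)) hw.2)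
    · exact ih (h.of_insert le_rfl le_rfl hw) hab

theorem AffineOnGaps.comp_affineOn {F : Finset ℝ} (hφ : AffineOnGaps φ F c d) {u v C D : ℝ}
    (huv : u < v) (hC : C ≠ 0) (hψ : ∀ x ∈ Icc u v, ψ x = C * x + D)
    (hmaps : MapsTo ψ (Icc u v) (Icc c d)) (havoid : ∀ x ∈ Ioo u v, ψ x ∉ F) :
    AffineOn (φ ∘ ψ) (Icc u v) := by
  have hψu := hψ u (left_mem_Icc.2 huv.le)
  have hψv := hψ v (right_mem_Icc.2 huv.le)
  have hne : ψ u ≠ ψ v := by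
    rw [hψu, hψv]
    exact fun h => hC (mul_right_cancel₀ (sub_ne_zero.2 huv.ne') (by linarith))
  have hcont : ContinuousOn ψ (uIcc u v) := by
    rw [uIcc_of_le huv.le]
    exact (continuous_const_mul C |>.add continuous_const).continuousOn.congr hψ
  have hc := hmaps (left_mem_Icc.2 huv.le)
  have hd := hmaps (right_mem_Icc.2 huv.le)
  obtain ⟨c', d', hφaff⟩ : AffineOn φ (uIcc (ψ u) (ψ v)) := by
    refine hφ _ _ (le_min hc.1 hd.1) (min_lt_max.2 hne) (max_le hc.2 hd.2) fun w hw hwI => ?_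
    obtain ⟨x, hx, rfl⟩ := intermediate_value_uIcc hcont (Ioo_subset_Icc_self hwI)
    rw [uIcc_of_le huv.le] at hx
    have hxu : x ≠ u := by
      rintro rfl
      simp only [mem_Ioo, min_lt_iff, lt_max_iff, lt_self_iff_false, false_or] at hwI
      exact lt_asymm hwI.1 hwI.2
    have hxv : x ≠ v := by
      rintro rfl
      simp only [mem_Ioo, min_lt_iff, lt_max_iff, lt_self_iff_false, or_false] at hwI
      exact lt_asymm hwI.1 hwI.2
    exact havoid x ⟨hx.1.lt_of_ne hxu.symm, hx.2.lt_of_ne hxv⟩ hw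
  refine ⟨c' * C, c' * D + d', fun x hx => ?_⟩
  have hx' : ψ x ∈ uIcc (ψ u) (ψ v) := by
    rw [mem_uIcc, hψ x hx, hψu, hψv]
    rcases le_total 0 C with hC | hC
    · exact Or.inl ⟨by nlinarith [hx.1], by nlinarith [hx.2]⟩
    · exact Or.inr ⟨by nlinarith [hx.2], by nlinarith [hx.1]⟩
  rw [Function.comp_apply, hφaff _ hx', hψ x hx]
  ring

/-- The breakpoints of `φ ∘ ψ`: those of `ψ`, and the points where a non-constant affine piece
of `ψ` hits a breakpoint of `φ`. -/
theorem AffineOnGaps.comp {Fφ Fψ : Finset ℝ} (hφ : AffineOnGaps φ Fφ c d)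
    (hψ : AffineOnGaps ψ Fψ a b) (hmaps : MapsTo ψ (Icc a b) (Icc c d)) :
    ∃ F, AffineOnGaps (φ ∘ ψ) F a b := by
  classical
  set G := insert a (insert b Fψ)
  set T : Set ℝ := ⋃ u ∈ G, ⋃ v ∈ G, ⋃ (_ : InjOn ψ (Icc u v)), Icc u v ∩ ψ ⁻¹' Fφ
  have hT : T.Finite :=
    G.finite_toSet.biUnion fun u _ => G.finite_toSet.biUnion fun v _ => finite_iUnion fun hinj =>
      Finite.of_finite_image (Fφ.finite_toSet.subset (image_subset_iff.2 inter_subset_right))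
        (hinj.mono inter_subset_left)
  refine ⟨G ∪ hT.toFinset, fun u' v' hau' huv' hv'b havoid => ?_⟩
  obtain ⟨u, hu, v, hv, huu', hv'v, hgap⟩ := G.exists_gap ⟨a, by simp [G], hau'⟩
    ⟨b, by simp [G], hv'b⟩ fun w hw => havoid w (Finset.mem_union_left _ hw)
  have hau : a ≤ u := not_lt.1 fun h => hgap a (by simp [G]) ⟨h, by linarith⟩
  have hvb : v ≤ b := not_lt.1 fun h => hgap b (by simp [G]) ⟨by linarith, h⟩
  obtain ⟨C, D, hCD⟩ := hψ u v hau (by linarith) hvb fun w hw => hgap w (by simp [G, hw])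
  have hsub : Icc u' v' ⊆ Icc u v := Icc_subset_Icc huu' hv'v
  rcases eq_or_ne C 0 with hC | hC
  · exact ⟨0, φ D, fun x hx => by simp [hCD x (hsub hx), hC]⟩
  have hinj : InjOn ψ (Icc u v) := fun x hx y hy hxy => by
    rw [hCD x hx, hCD y hy] at hxy
    exact mul_left_cancel₀ hC (add_right_cancel hxy)
  refine hφ.comp_affineOn huv' hC (fun x hx => hCD x (hsub hx))
    (hmaps.mono_left (Icc_subset_Icc hau' hv'b)) fun x hx hxF => havoid x ?_ hx
  refine Finset.mem_union_right _ (hT.mem_toFinset.2 ?_)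
  exact mem_iUnion₂.2 ⟨u, hu, mem_iUnion₂.2 ⟨v, hv,
    mem_iUnion.2 ⟨hinj, hsub (Ioo_subset_Icc_self hx), hxF⟩⟩⟩

theorem IsPLOn.comp (hφ : IsPLOn φ c d) (hψ : IsPLOn ψ a b)
    (hmaps : MapsTo ψ (Icc a b) (Icc c d)) : IsPLOn (φ ∘ ψ) a b := by
  obtain ⟨Fφ, hFφ⟩ := hφ.exists_affineOnGaps
  obtain ⟨Fψ, hFψ⟩ := hψ.exists_affineOnGaps
  obtain ⟨F, hF⟩ := hFφ.comp hFψ hmaps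
  exact hF.isPLOn hψ.lt

theorem IsPLOn.iterate (hφ : IsPLOn φ a b) (hmaps : MapsTo φ (Icc a b) (Icc a b)) :
    ∀ n, IsPLOn φ^[n] a b
  | 0 => AffineOn.isPLOn ⟨1, 0, by simp⟩ hφ.lt
  | n + 1 => by
    rw [Function.iterate_succ']
    exact hφ.comp (hφ.iterate hmaps n) (hmaps.iterate n)

theorem IsPLOn.congr (hφ : IsPLOn φ a b) (heq : EqOn φ ψ (Icc a b)) : IsPLOn ψ a b := by
  obtain ⟨F, hF⟩ := hφ.exists_affineOnGaps
  refine AffineOnGaps.isPLOn (F := F) (fun u v hau huv hvb havoid => ?_) hφ.lt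
  obtain ⟨c, d, hcd⟩ := hF u v hau huv hvb havoid
  exact ⟨c, d, fun x hx => (heq ⟨hau.trans hx.1, hx.2.trans hvb⟩).symm.trans (hcd x hx)⟩

end PiecewiseLinear

theorem tent_of_le_half {x : ℝ} (hx : x ≤ 1 / 2) : tent x = 2 * x :=
  min_eq_left (by linarith)

theorem tent_of_half_le {x : ℝ} (hx : 1 / 2 ≤ x) : tent x = 2 - 2 * x :=
  min_eq_right (by linarith)

theorem mapsTo_tent : MapsTo tent (Icc 0 1) (Icc 0 1) := by
  intro x ⟨hx0, hx1⟩
  rcases le_total x (1 / 2) with hx | hx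
  · rw [tent_of_le_half hx]; constructor <;> linarith
  · rw [tent_of_half_le hx]; constructor <;> linarith

theorem div_two_pow_mem_Icc {z : ℝ} (hz : z ∈ Icc 0 1) (n : ℕ) : z / 2 ^ n ∈ Icc 0 1 :=
  ⟨div_nonneg hz.1 (by positivity), div_le_one_of_le₀ (hz.2.trans (one_le_pow₀ one_le_two))
    (by positivity)⟩

theorem mapsTo_div_two_pow (m : ℕ) :
    MapsTo (fun k : ℕ => (k : ℝ) / 2 ^ m) (Iic (2 ^ m)) (Icc 0 1) := fun k hk =>
  ⟨by positivity, div_le_one_of_le₀ (by exact_mod_cast hk) (by positivity)⟩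

theorem tent_iterate_div_two_pow {z : ℝ} (hz : z ∈ Icc 0 1) (n : ℕ) :
    tent^[n] (z / 2 ^ n) = z := by
  induction n with
  | zero => simp
  | succ n ih =>
    have hle : z / 2 ^ (n + 1) ≤ 1 / 2 := by
      rw [pow_succ, ← div_div]
      gcongr
      exact (div_two_pow_mem_Icc hz n).2
    rw [Function.iterate_succ_apply, tent_of_le_half hle, pow_succ, mul_div_assoc', mul_comm,
      mul_div_mul_right _ _ two_ne_zero, ih]

def IsDyadic (m : ℕ) (x : ℝ) : Prop := ∃ k : ℤ, x * 2 ^ m = k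

theorem isDyadic_tent_iff (x : ℝ) (m : ℕ) :
    IsDyadic m (tent x) ↔ IsDyadic (m + 1) x := by
  rcases le_total x (1 / 2) with hx' | hx'
  · rw [IsDyadic, IsDyadic, tent_of_le_half hx', pow_succ]
    ring_nf
  · rw [tent_of_half_le hx']
    constructor
    · rintro ⟨k, hk⟩
      exact ⟨2 ^ (m + 1) - k, by push_cast; rw [← hk]; ring⟩
    · rintro ⟨k, hk⟩
      exact ⟨2 ^ (m + 1) - k, by push_cast; rw [← hk]; ring⟩

theorem isDyadic_tent_iterate_iff (x : ℝ) (m : ℕ) :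
    IsDyadic 0 (tent^[m] x) ↔ IsDyadic m x := by
  induction m generalizing x with
  | zero => rfl
  | succ m ih => rw [Function.iterate_succ_apply, ih, isDyadic_tent_iff]

theorem tent_eq_zero_iff {y : ℝ} (hy : y ∈ Icc 0 1) : tent y = 0 ↔ IsDyadic 0 y := by
  simp only [IsDyadic, pow_zero, mul_one]
  constructor
  · intro h
    rcases le_total y (1 / 2) with hy' | hy'
    · exact ⟨0, by rw [tent_of_le_half hy'] at h; push_cast; linarith⟩
    · exact ⟨1, by rw [tent_of_half_le hy'] at h; push_cast; linarith⟩
  · rintro ⟨k, rfl⟩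
    have h0 : 0 ≤ k := by exact_mod_cast hy.1
    have h1 : k ≤ 1 := by exact_mod_cast hy.2
    interval_cases k <;> norm_num [tent]

theorem preimZero_tent (m : ℕ) :
    preimZero tent (m + 1) = (fun k : ℕ => (k : ℝ) / 2 ^ m) '' Iic (2 ^ m) := by
  ext x
  simp only [preimZero, mem_image, mem_Iic]
  constructor
  · rintro ⟨hx, h0⟩
    rw [Function.iterate_succ_apply', tent_eq_zero_iff ((mapsTo_tent.iterate m) hx),
      isDyadic_tent_iterate_iff] at h0
    obtain ⟨k, hk⟩ := h0
    have hk0 : 0 ≤ k := by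
      exact_mod_cast (hk ▸ mul_nonneg hx.1 (by positivity) : (0 : ℝ) ≤ k)
    lift k to ℕ using hk0
    refine ⟨k, ?_, ?_⟩
    · have : ((k : ℤ) : ℝ) ≤ 2 ^ m := hk ▸ mul_le_of_le_one_left (by positivity) hx.2
      exact_mod_cast this
    · rw [div_eq_iff (by positivity)]
      exact_mod_cast hk.symm
  · rintro ⟨k, hk, rfl⟩
    have hx := mapsTo_div_two_pow m hk
    refine ⟨hx, ?_⟩
    rw [Function.iterate_succ_apply', tent_eq_zero_iff ((mapsTo_tent.iterate m) hx),
      isDyadic_tent_iterate_iff]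
    exact ⟨k, by field_simp; simp⟩

theorem StrictMonoOn.eqOn_of_image_Iic_eq {β : Type*} [Preorder β] {e f : ℕ → β} {N : ℕ}
    (he : StrictMonoOn e (Iic N)) (hf : StrictMonoOn f (Iic N))
    (himage : e '' Iic N = f '' Iic N) : EqOn e f (Iic N) := by
  have hrestrict : ∀ {e : ℕ → β}, StrictMonoOn e (Iic N) →
      StrictMono (fun i : Fin (N + 1) => e i) ∧ range (fun i : Fin (N + 1) => e i) = e '' Iic N :=
    fun he => ⟨fun i j hij => he (mem_Iic.2 (Nat.lt_succ_iff.1 i.2))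
      (mem_Iic.2 (Nat.lt_succ_iff.1 j.2)) hij, by
      ext y
      simp only [mem_range, mem_image, mem_Iic]
      exact ⟨fun ⟨i, hi⟩ => ⟨i, Nat.lt_succ_iff.1 i.2, hi⟩,
        fun ⟨i, hi, hy⟩ => ⟨⟨i, Nat.lt_succ_of_le hi⟩, hy⟩⟩⟩
  obtain ⟨he', hre⟩ := hrestrict he
  obtain ⟨hf', hrf⟩ := hrestrict hf
  have := (he'.range_inj hf').1 (hre.trans (himage.trans hrf.symm))
  exact fun k hk => congrFun this ⟨k, Nat.lt_succ_of_le hk⟩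

open Filter Topology

theorem floor_mul_two_pow_div_mem_Icc {x : ℝ} (hx : 0 ≤ x) (m : ℕ) :
    (⌊x * 2 ^ m⌋₊ : ℝ) / 2 ^ m ∈ Icc 0 x :=
  ⟨by positivity, div_le_of_le_mul₀ (by positivity) hx (Nat.floor_le (by positivity))⟩

theorem tendsto_floor_mul_two_pow_div {x : ℝ} (hx : 0 ≤ x) :
    Tendsto (fun m : ℕ => (⌊x * 2 ^ m⌋₊ : ℝ) / 2 ^ m) atTop (𝓝[Icc 0 x] x) :=
  tendsto_nhdsWithin_iff.2 ⟨(tendsto_nat_floor_mul_div_atTop hx).comp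
    (tendsto_pow_atTop_atTop_of_one_lt one_lt_two),
    Eventually.of_forall (floor_mul_two_pow_div_mem_Icc hx)⟩

namespace ConjTent

variable {g h : ℝ → ℝ}

theorem iterate (hh : ConjTent g h) (n : ℕ) {x : ℝ} (hx : x ∈ Icc 0 1) :
    h (tent^[n] x) = g^[n] (h x) := by
  induction n generalizing x with
  | zero => rfl
  | succ n ih =>
    rw [Function.iterate_succ_apply, Function.iterate_succ_apply, ih (mapsTo_tent hx),
      hh.2.2 x hx]

theorem strictMonoOn (hh : ConjTent g h) : StrictMonoOn h (Icc 0 1) :=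
  hh.1.1.strictMonoOn_of_injOn_Icc zero_le_one
    (by rw [hh.2.1]; exact (hh.1.2.mapsTo (right_mem_Icc.2 zero_le_one)).1) hh.1.2.injOn

theorem preimZero_eq_image (hh : ConjTent g h) (n : ℕ) :
    preimZero g n = h '' preimZero tent n := by
  have hbij := hh.1.2
  have h0 := hh.2.1
  ext y
  constructor
  · rintro ⟨hy, hgy⟩
    obtain ⟨x, hx, rfl⟩ := hbij.surjOn hy
    refine ⟨x, ⟨hx, hbij.injOn ((mapsTo_tent.iterate n) hx) (left_mem_Icc.2 zero_le_one) ?_⟩,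
      rfl⟩
    rw [hh.iterate n hx, hgy, h0]
  · rintro ⟨x, ⟨hx, htx⟩, rfl⟩
    exact ⟨hbij.mapsTo hx, by rw [← hh.iterate n hx, htx, h0]⟩

theorem mu_eq (hh : ConjTent g h) {μ : ℕ → ℕ → ℝ} (hμ : IsMuSeq g μ) (m : ℕ) {k : ℕ}
    (hk : k ≤ 2 ^ m) : μ (m + 1) k = h (k / 2 ^ m) := by
  obtain ⟨hstep, hset⟩ := hμ (m + 1) (Nat.le_add_left 1 m)
  rw [Nat.add_sub_cancel] at hstep hset
  have hdyadic : StrictMonoOn (fun k : ℕ => (k : ℝ) / 2 ^ m) (Iic (2 ^ m)) :=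
    fun i _ j _ hij => by dsimp only; gcongr
  refine StrictMonoOn.eqOn_of_image_Iic_eq (strictMonoOn_Iic_of_lt_succ hstep)
    (hh.strictMonoOn.comp hdyadic (mapsTo_div_two_pow m)) ?_ hk
  rw [image_comp, ← preimZero_tent, ← hh.preimZero_eq_image]
  ext x
  simp only [mem_image, mem_Iic]
  exact (hset x).symm

theorem exists_eqOn_mul_of_isPLOn (hh : ConjTent g h) (hPL : IsPLOn h 0 1) :
    ∃ s t, 0 < s ∧ s ≤ 1 ∧ 0 < t ∧ EqOn h (fun x => t * x) (Icc 0 s) := by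
  obtain ⟨s, hs, hs1, c, d, hcd⟩ := hPL.exists_affineOn_Icc_left
  have hd : d = 0 := by
    have := hcd 0 (left_mem_Icc.2 hs.le)
    rw [hh.2.1] at this
    linarith
  have hc : 0 < c := by
    have hpos : h 0 < h s := hh.strictMonoOn (left_mem_Icc.2 zero_le_one) ⟨hs.le, hs1⟩ hs
    rw [hh.2.1, hcd s (right_mem_Icc.2 hs.le), hd, add_zero] at hpos
    exact pos_of_mul_pos_left hpos hs.le
  exact ⟨s, c, hs, hs1, hc, fun x hx => by simp [hcd x hx, hd]⟩

theorem exists_eqOn_mul_of_dyadic (hh : ConjTent g h) {r t : ℝ} (hr : 0 < r)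
    (hdy : ∀ m k : ℕ, k ≤ 2 ^ m → h (k / 2 ^ m) < r → h (k / 2 ^ m) = t * (k / 2 ^ m)) :
    ∃ ε > 0, EqOn h (fun x => t * x) (Icc 0 ε) := by
  have hnear : ∀ᶠ x in 𝓝[≥] 0, h x < r := by
    rw [← nhdsWithin_Icc_eq_nhdsGE one_pos]
    exact (hh.1.1 0 (left_mem_Icc.2 zero_le_one)).eventually (gt_mem_nhds (by rwa [hh.2.1]))
  obtain ⟨δ, hδ, hsub⟩ := mem_nhdsGE_iff_exists_Icc_subset.1 hnear
  refine ⟨min δ 1, lt_min hδ one_pos, fun x hx => ?_⟩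
  have hx1 : x ∈ Icc 0 1 := ⟨hx.1, hx.2.trans (min_le_right _ _)⟩
  have hu := tendsto_floor_mul_two_pow_div hx.1
  have hhu : ∀ m : ℕ, h (⌊x * 2 ^ m⌋₊ / 2 ^ m) = t * (⌊x * 2 ^ m⌋₊ / 2 ^ m) := fun m => by
    have hum := floor_mul_two_pow_div_mem_Icc hx.1 m
    refine hdy m _ (Nat.floor_le_of_le ?_)
      (hsub ⟨hum.1, hum.2.trans (hx.2.trans (min_le_left _ _))⟩)
    push_cast
    exact mul_le_of_le_one_left (by positivity) hx1.2
  exact tendsto_nhds_unique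
    ((hh.1.1 x hx1).tendsto.comp
      (hu.mono_right (nhdsWithin_mono x (Icc_subset_Icc_right hx1.2))))
    (((hu.mono_right nhdsWithin_le_nhds).const_mul t).congr fun m => (hhu m).symm)

theorem isPLOn_of_eqOn_mul (hh : ConjTent g h) (hg : IsPLOn g 0 1)
    (hgmaps : MapsTo g (Icc 0 1) (Icc 0 1)) {ε t : ℝ} (hε : 0 < ε)
    (hlin : EqOn h (fun x => t * x) (Icc 0 ε)) : IsPLOn h 0 1 := by
  obtain ⟨N, hN⟩ := exists_pow_lt_of_lt_one hε (by norm_num : (1 / 2 : ℝ) < 1)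
  have hscale : ∀ z ∈ Icc (0 : ℝ) 1, t / 2 ^ N * z = h (z / 2 ^ N) := fun z hz => by
    have hsmall : z / 2 ^ N ≤ ε :=
      calc z / 2 ^ N ≤ 1 / 2 ^ N := by gcongr; exact hz.2
        _ = (1 / 2) ^ N := by rw [one_div_pow]
        _ ≤ ε := hN.le
    rw [hlin ⟨(div_two_pow_mem_Icc hz N).1, hsmall⟩]
    ring
  have hmaps : MapsTo (fun z => t / 2 ^ N * z) (Icc 0 1) (Icc 0 1) := fun z hz => by
    simpa only [hscale z hz] using hh.1.2.mapsTo (div_two_pow_mem_Icc hz N)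
  refine ((hg.iterate hgmaps N).comp (AffineOn.isPLOn ⟨t / 2 ^ N, 0, by simp⟩ one_pos)
    hmaps).congr fun z hz => ?_
  change g^[N] (t / 2 ^ N * z) = h z
  rw [hscale z hz, ← hh.iterate N (div_two_pow_mem_Icc hz N), tent_iterate_div_two_pow hz]

end ConjTent

/-- For a carcass map `g` conjugated to the tent map via `h`, the conjugacy
`h` is piecewise linear iff there are `r, t > 0` with `μ_{n,k}(g) = t·k/2^{n-1}` whenever
`μ_{n,k}(g) < r`. -/
theorem pl_conjugacy_iff_mu_linear (g h : ℝ → ℝ) (hg : IsCarcass g)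
    (hh : ConjTent g h) (μ : ℕ → ℕ → ℝ) (hμ : IsMuSeq g μ) :
    IsPLOn h 0 1 ↔
    ∃ r t : ℝ, 0 < r ∧ 0 < t ∧ ∀ n, 1 ≤ n → ∀ k ≤ 2 ^ (n - 1),
      μ n k < r → μ n k = t * (k : ℝ) / 2 ^ (n - 1) := by
  constructor
  · intro hPL
    obtain ⟨s, t, hs, hs1, ht, hlin⟩ := hh.exists_eqOn_mul_of_isPLOn hPL
    refine ⟨t * s, t, by positivity, ht, fun n hn k hk hlt => ?_⟩
    obtain ⟨m, rfl⟩ := Nat.exists_eq_add_of_le' hn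
    rw [Nat.add_sub_cancel] at hk ⊢
    have hts : h s = t * s := hlin (right_mem_Icc.2 hs.le)
    rw [hh.mu_eq hμ m hk, ← hts] at hlt
    have hks := (hh.strictMonoOn.lt_iff_lt (mapsTo_div_two_pow m hk) ⟨hs.le, hs1⟩).1 hlt
    rw [hh.mu_eq hμ m hk, hlin ⟨by positivity, hks.le⟩, mul_div_assoc]
  · rintro ⟨r, t, hr, -, hμlin⟩
    obtain ⟨ε, hε, hlin⟩ := hh.exists_eqOn_mul_of_dyadic hr fun m k hk => by
      have := hμlin (m + 1) (Nat.le_add_left 1 m) k (by simpa using hk)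
      rwa [Nat.add_sub_cancel, hh.mu_eq hμ m hk, mul_div_assoc] at this
    exact hh.isPLOn_of_eqOn_mul hg.2 hg.1.2.1 hε hlin
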